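/- arXiv:1909.11842 — 5 statements merged into one kernel-verified Lean document; each statement's English description precedes it below -/
import Mathlib

section
/- Let G be a group given as an extension 1 → N → G → Q → 1. There is a bijective correspondence between subgroups H of G and triples (Q_H, N_H, α_H) where Q_H ≤ Q, N_H ≤ N, and α_H : Q_H → N_G(N_H)/N_H is an (injective) homomorphism such that for every q ∈ Q_H, the coset α_H(q)N_H is contained in the preimage of q under the projection G → Q. -/
/-!
A subgroup `H ≤ G` is the union of the cosets of `H ⊓ N` that it meets; two of them lie over the
same point of `G ⧸ N` exactly when they coincide, so sending `q ∈ HN/N` to the coset of `H` over `q`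
is a homomorphism into `N_G(H ⊓ N) ⧸ (H ⊓ N)`. Conversely, for `α` whose cosets lie over their
arguments, the union of the cosets `α q` is the preimage of `range α` in `N_G(L)`, hence a subgroup,
and any subgroup represented by `α` is that union. Injectivity of `α` is automatic, since cosets
over distinct points of `G ⧸ N` are disjoint.
-/

open Subgroup QuotientGroup

section

variable {G : Type*} [Group G] (N : Subgroup G) [N.Normal]

abbrev NormalizerQuotient (L : Subgroup G) : Type _ :=
  normalizer (L : Set G) ⧸ L.subgroupOf (normalizer (L : Set G))

def LiesOver {R : Subgroup (G ⧸ N)} {L : Subgroup G} (α : R →* NormalizerQuotient L) : Prop :=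
  ∀ (q : R) (g : normalizer (L : Set G)),
    (mk g : NormalizerQuotient L) = α q → (mk (g : G) : G ⧸ N) = q

def Represents (H : Subgroup G) {R : Subgroup (G ⧸ N)} {L : Subgroup G}
    (α : R →* NormalizerQuotient L) : Prop :=
  H ⊓ N = L ∧ map (mk' N) H = R ∧
    ∀ (q : R) (g : normalizer (L : Set G)),
      ((g : G) ∈ H ∧ (mk (g : G) : G ⧸ N) = q) ↔ (mk g : NormalizerQuotient L) = α q

theorem le_normalizer_inf_of_normal (H : Subgroup G) :
    H ≤ normalizer ((H ⊓ N : Subgroup G) : Set G) :=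
  (le_inf H.le_normalizer le_normalizer_of_normal).trans inf_normalizer_le_normalizer_inf

theorem mk_eq_mk_normalizerQuotient_iff {L : Subgroup G} {g h : normalizer (L : Set G)} :
    (mk g : NormalizerQuotient L) = mk h ↔ (g : G)⁻¹ * h ∈ L := by
  rw [QuotientGroup.eq, mem_subgroupOf]; rfl

variable {N} {R : Subgroup (G ⧸ N)} {L : Subgroup G} {α : R →* NormalizerQuotient L}

theorem LiesOver.injective (hα : LiesOver N α) : Function.Injective α := by
  intro q q' e
  obtain ⟨g, hg⟩ := mk_surjective (α q)
  exact Subtype.ext <| (hα q g hg).symm.trans (hα q' g (hg.trans e))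

def cosetUnion (α : R →* NormalizerQuotient L) : Subgroup G :=
  (α.range.comap (mk' (L.subgroupOf (normalizer (L : Set G))))).map
    (normalizer (L : Set G)).subtype

theorem mem_cosetUnion {g : G} :
    g ∈ cosetUnion α ↔ ∃ h : normalizer (L : Set G), (h : G) = g ∧ ∃ q, α q = mk h := by
  simp only [cosetUnion, mem_map, mem_comap, MonoidHom.mem_range, coe_subtype, mk'_apply]
  exact exists_congr fun _ => and_comm

theorem coe_mem_cosetUnion_of_mk_eq (h : normalizer (L : Set G)) (q : R)
    (e : (mk h : NormalizerQuotient L) = α q) : (h : G) ∈ cosetUnion α :=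
  mem_cosetUnion.mpr ⟨h, rfl, q, e.symm⟩

theorem Represents.eq_cosetUnion {H : Subgroup G} (hH : Represents N H α) : H = cosetUnion α := by
  obtain ⟨hHN, hHR, hHα⟩ := hH
  have hH : H ≤ normalizer (L : Set G) := hHN ▸ le_normalizer_inf_of_normal N H
  ext g
  refine ⟨fun hg => ?_, fun hg => ?_⟩
  · have hgR : (mk g : G ⧸ N) ∈ R := hHR ▸ mem_map_of_mem _ hg
    exact coe_mem_cosetUnion_of_mk_eq ⟨g, hH hg⟩ ⟨_, hgR⟩ ((hHα _ _).mp ⟨hg, rfl⟩)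
  · obtain ⟨h, rfl, q, e⟩ := mem_cosetUnion.mp hg
    exact ((hHα q h).mpr e.symm).1

theorem cosetUnion_inf (hLN : L ≤ N) (hα : LiesOver N α) : cosetUnion α ⊓ N = L := by
  ext x
  rw [mem_inf]
  refine ⟨fun ⟨hxα, hxN⟩ => ?_, fun hx => ⟨?_, hLN hx⟩⟩
  · obtain ⟨h, rfl, q, e⟩ := mem_cosetUnion.mp hxα
    have hq : q = 1 :=
      Subtype.ext <| (hα q h e.symm).symm.trans ((QuotientGroup.eq_one_iff _).mpr hxN)
    rw [hq, map_one, eq_comm, QuotientGroup.eq_one_iff, mem_subgroupOf] at e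
    exact e
  · refine coe_mem_cosetUnion_of_mk_eq ⟨x, le_normalizer hx⟩ 1 ?_
    rw [map_one, QuotientGroup.eq_one_iff, mem_subgroupOf]
    exact hx

theorem map_cosetUnion (hα : LiesOver N α) : map (mk' N) (cosetUnion α) = R := by
  ext x
  refine ⟨fun hx => ?_, fun hx => ?_⟩
  · obtain ⟨_, hg, rfl⟩ := mem_map.mp hx
    obtain ⟨h, rfl, q, e⟩ := mem_cosetUnion.mp hg
    rw [mk'_apply, hα q h e.symm]
    exact q.2
  · obtain ⟨h, e⟩ := mk_surjective (α ⟨x, hx⟩)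
    exact ⟨h, coe_mem_cosetUnion_of_mk_eq h _ e, hα _ h e⟩

theorem represents_cosetUnion (hLN : L ≤ N) (hα : LiesOver N α) :
    Represents N (cosetUnion α) α := by
  refine ⟨cosetUnion_inf hLN hα, map_cosetUnion hα, fun q g => ⟨fun ⟨hg, hgq⟩ => ?_, fun e => ?_⟩⟩
  · obtain ⟨h, hhg, q', e⟩ := mem_cosetUnion.mp hg
    obtain rfl : h = g := Subtype.ext hhg
    obtain rfl : q' = q := Subtype.ext <| (hα q' h e.symm).symm.trans hgq
    exact e.symm
  · exact ⟨coe_mem_cosetUnion_of_mk_eq g q e, hα q g e⟩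

theorem existsUnique_represents (hLN : L ≤ N) (hα : LiesOver N α) : ∃! H, Represents N H α :=
  ⟨cosetUnion α, represents_cosetUnion hLN hα, fun _ hH => hH.eq_cosetUnion⟩

variable (N) (H : Subgroup G)

noncomputable def cosetHom : map (mk' N) H →* NormalizerQuotient (H ⊓ N) :=
  ((mk' N).subgroupMap H).liftOfSurjective ((mk' N).subgroupMap_surjective H)
    ⟨(mk' _).comp (inclusion (le_normalizer_inf_of_normal N H)), fun h hh => by
      rw [MonoidHom.mem_ker, MonoidHom.comp_apply, mk'_apply, QuotientGroup.eq_one_iff,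
        mem_subgroupOf]
      exact ⟨h.2, (QuotientGroup.eq_one_iff _).mp (congrArg Subtype.val hh)⟩⟩

theorem cosetHom_subgroupMap (h : H) :
    cosetHom N H ((mk' N).subgroupMap H h) = mk (inclusion (le_normalizer_inf_of_normal N H) h) :=
  MonoidHom.liftOfRightInverse_comp_apply _ _ _ _ h

theorem mk_eq_cosetHom_iff (q : map (mk' N) H) (g : normalizer ((H ⊓ N : Subgroup G) : Set G)) :
    (mk g : NormalizerQuotient (H ⊓ N)) = cosetHom N H q ↔
      (g : G) ∈ H ∧ (mk (g : G) : G ⧸ N) = q := by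
  obtain ⟨h, rfl⟩ := (mk' N).subgroupMap_surjective H q
  rw [cosetHom_subgroupMap, mk_eq_mk_normalizerQuotient_iff, coe_inclusion, mem_inf,
    mul_mem_cancel_right h.2, inv_mem_iff]
  exact and_congr_right fun _ => QuotientGroup.eq.symm

theorem represents_cosetHom : Represents N H (cosetHom N H) :=
  ⟨rfl, rfl, fun q g => (mk_eq_cosetHom_iff N H q g).symm⟩

theorem liesOver_cosetHom : LiesOver N (cosetHom N H) :=
  fun q g e => ((mk_eq_cosetHom_iff N H q g).mp e).2

end

theorem goursat_extension_general {G : Type*} [Group G] (N : Subgroup G) [N.Normal]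
    (R : Subgroup (G ⧸ N)) (L : Subgroup G) (hLN : L ≤ N)
    (α : R →* (Subgroup.normalizer (L : Set G)) ⧸ L.subgroupOf (Subgroup.normalizer (L : Set G)))
    (hcomp : ∀ (q : R) (g : (Subgroup.normalizer (L : Set G))),
      (QuotientGroup.mk g : (Subgroup.normalizer (L : Set G)) ⧸ L.subgroupOf (Subgroup.normalizer (L : Set G))) = α q →
      (QuotientGroup.mk (g : G) : G ⧸ N) = (q : G ⧸ N)) :
    (∃! H : Subgroup G,
      H ⊓ N = L ∧ Subgroup.map (QuotientGroup.mk' N) H = R ∧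
      ∀ (q : R) (g : (Subgroup.normalizer (L : Set G))),
        (((g : G) ∈ H) ∧ (QuotientGroup.mk (g : G) : G ⧸ N) = (q : G ⧸ N)) ↔
          (QuotientGroup.mk g : (Subgroup.normalizer (L : Set G)) ⧸ L.subgroupOf (Subgroup.normalizer (L : Set G))) = α q) ∧
    (∀ H : Subgroup G,
      ∃ (R' : Subgroup (G ⧸ N)) (L' : Subgroup G) (_ : L' ≤ N)
        (α' : R' →* (Subgroup.normalizer (L' : Set G)) ⧸ L'.subgroupOf (Subgroup.normalizer (L' : Set G))),
        Function.Injective α' ∧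
        (∀ (q : R') (g : (Subgroup.normalizer (L' : Set G))),
          (QuotientGroup.mk g : (Subgroup.normalizer (L' : Set G)) ⧸ L'.subgroupOf (Subgroup.normalizer (L' : Set G))) = α' q →
          (QuotientGroup.mk (g : G) : G ⧸ N) = (q : G ⧸ N)) ∧
        H ⊓ N = L' ∧ Subgroup.map (QuotientGroup.mk' N) H = R' ∧
        ∀ (q : R') (g : (Subgroup.normalizer (L' : Set G))),
          (((g : G) ∈ H) ∧ (QuotientGroup.mk (g : G) : G ⧸ N) = (q : G ⧸ N)) ↔
            (QuotientGroup.mk g : (Subgroup.normalizer (L' : Set G)) ⧸ L'.subgroupOf (Subgroup.normalizer (L' : Set G))) = α' q) :=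
  ⟨existsUnique_represents hLN hcomp, fun H => ⟨_, _, inf_le_right, cosetHom N H,
    (liesOver_cosetHom N H).injective, liesOver_cosetHom N H, represents_cosetHom N H⟩⟩

/-- Goursat lemma for group extensions `1 → N → G → Q → 1` with `Q = G ⧸ N`:
subgroups `H ≤ G` correspond bijectively to triples `(Q_H, N_H, α_H)` where
`Q_H ≤ Q`, `N_H ≤ N`, and `α_H : Q_H → N_G(N_H)/N_H` is an (injective)
homomorphism whose value at `q` is a coset contained in the preimage of `q`.
The first conjunct says every such triple determines a unique subgroup `H`;
the second says every subgroup `H` arises from such a triple. -/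
theorem goursat_extension {G : Type*} [Group G] (N : Subgroup G) [N.Normal]
    (R : Subgroup (G ⧸ N)) (L : Subgroup G) (hLN : L ≤ N)
    (α : R →* (Subgroup.normalizer (L : Set G)) ⧸ L.subgroupOf (Subgroup.normalizer (L : Set G)))
    (hinj : Function.Injective α)
    (hcomp : ∀ (q : R) (g : (Subgroup.normalizer (L : Set G))),
      (QuotientGroup.mk g : (Subgroup.normalizer (L : Set G)) ⧸ L.subgroupOf (Subgroup.normalizer (L : Set G))) = α q →
      (QuotientGroup.mk (g : G) : G ⧸ N) = (q : G ⧸ N)) :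
    (∃! H : Subgroup G,
      H ⊓ N = L ∧ Subgroup.map (QuotientGroup.mk' N) H = R ∧
      ∀ (q : R) (g : (Subgroup.normalizer (L : Set G))),
        (((g : G) ∈ H) ∧ (QuotientGroup.mk (g : G) : G ⧸ N) = (q : G ⧸ N)) ↔
          (QuotientGroup.mk g : (Subgroup.normalizer (L : Set G)) ⧸ L.subgroupOf (Subgroup.normalizer (L : Set G))) = α q) ∧
    (∀ H : Subgroup G,
      ∃ (R' : Subgroup (G ⧸ N)) (L' : Subgroup G) (_ : L' ≤ N)
        (α' : R' →* (Subgroup.normalizer (L' : Set G)) ⧸ L'.subgroupOf (Subgroup.normalizer (L' : Set G))),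
        Function.Injective α' ∧
        (∀ (q : R') (g : (Subgroup.normalizer (L' : Set G))),
          (QuotientGroup.mk g : (Subgroup.normalizer (L' : Set G)) ⧸ L'.subgroupOf (Subgroup.normalizer (L' : Set G))) = α' q →
          (QuotientGroup.mk (g : G) : G ⧸ N) = (q : G ⧸ N)) ∧
        H ⊓ N = L' ∧ Subgroup.map (QuotientGroup.mk' N) H = R' ∧
        ∀ (q : R') (g : (Subgroup.normalizer (L' : Set G))),
          (((g : G) ∈ H) ∧ (QuotientGroup.mk (g : G) : G ⧸ N) = (q : G ⧸ N)) ↔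
            (QuotientGroup.mk g : (Subgroup.normalizer (L' : Set G)) ⧸ L'.subgroupOf (Subgroup.normalizer (L' : Set G))) = α' q) :=
  goursat_extension_general N R L hLN α hcomp
end

section
/- Let G be a finitely generated group. There exists a sequence (T_i) of finite subsets of G such that: for every finite index subgroup H ≤ G there exists i₀ with the property that for all i ≥ i₀, the set T_i is a finite-to-one left transversal of H, i.e. T_i contains the same (positive, finite) number of elements from each left coset of H. -/
private theorem freeGroup_countable {α : Type*} [Countable α] : Countable (FreeGroup α) := by
  classical
  exact FreeGroup.toWord_injective.countable

private def prodFstFiber {A B : Type*} (q : A) : {p : A × B // p.1 = q} ≃ B where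
  toFun p := p.1.2
  invFun b := ⟨(q, b), rfl⟩
  left_inv p := Subtype.ext (Prod.ext p.2.symm rfl)
  right_inv _ := rfl

private theorem countable_of_fg {G : Type*} [Group G] (hfg : Group.FG G) : Countable G := by
  obtain ⟨S, hS⟩ := Group.fg_def.mp hfg
  have hsurj : Function.Surjective (FreeGroup.lift (fun x : (S : Set G) => (x : G))) := by
    rw [← MonoidHom.range_eq_top, FreeGroup.range_lift_eq_closure, Subtype.range_coe, hS]
  haveI := freeGroup_countable (α := ((S : Set G) : Type _))
  exact hsurj.countable

private theorem aux_count {G : Type*} [Group G] {N H : Subgroup G}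
    (hle : N ≤ H) (g : G) :
    {t ∈ Set.range (Quotient.out : G ⧸ N → G) | g⁻¹ * t ∈ H}.ncard = N.relIndex H := by
  classical
  have hset : {t ∈ Set.range (Quotient.out : G ⧸ N → G) | g⁻¹ * t ∈ H}
      = Quotient.out '' {x : G ⧸ N | g⁻¹ * x.out ∈ H} := by
    ext t
    constructor
    · rintro ⟨⟨x, rfl⟩, ht⟩; exact ⟨x, ht, rfl⟩
    · rintro ⟨x, hx, rfl⟩; exact ⟨⟨x, rfl⟩, hx⟩
  rw [hset, Set.ncard_image_of_injective _ Quotient.out_injective,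
    ← Nat.card_coe_set_eq]
  have h2 : {x : G ⧸ N | g⁻¹ * x.out ∈ H}
      = {x : G ⧸ N | Subgroup.quotientMapOfLE hle x = (g : G ⧸ H)} := by
    ext x
    have hx : Subgroup.quotientMapOfLE hle x = ((x.out : G) : G ⧸ H) := by
      conv_lhs => rw [← Quotient.out_eq' x]
      rfl
    simp only [Set.mem_setOf_eq, hx]
    rw [eq_comm, QuotientGroup.eq]
  rw [h2]
  have key : Nat.card {x : G ⧸ N // Subgroup.quotientMapOfLE hle x = (g : G ⧸ H)}
      = Nat.card (H ⧸ N.subgroupOf H) := by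
    refine Nat.card_congr ?_
    exact (Equiv.subtypeEquiv (Subgroup.quotientEquivProdOfLE hle) fun x => Iff.rfl).trans
      (prodFstFiber _)
  exact key

/-- A finitely generated group admits a universal sequence of transversals:
a sequence `T i` of finite subsets such that every finite index subgroup `H`
admits `T i` as a finite-to-one left transversal for all `i` sufficiently large,
i.e. `T i` contains the same positive number of elements from each left coset of `H`. -/
theorem exists_universal_transversal_sequence {G : Type*} [Group G] (hfg : Group.FG G) :
    ∃ T : ℕ → Finset G, ∀ H : Subgroup G, H.FiniteIndex →
      ∃ i₀ : ℕ, ∀ i ≥ i₀, ∃ k : ℕ, 0 < k ∧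
        ∀ g : G, ({t ∈ (T i : Set G) | g⁻¹ * t ∈ H}).ncard = k := by
  classical
  haveI := hfg
  haveI : Countable G := countable_of_fg hfg
  have hFG : ∀ H : Subgroup G, H.FiniteIndex → ∃ S : Finset G,
      Subgroup.closure (S : Set G) = H := by
    intro H hH
    haveI := hH
    exact (Group.fg_iff_subgroup_fg H).mp (Subgroup.fg_of_index_ne_zero H)
  choose f hf using hFG
  haveI : Countable {H : Subgroup G // H.FiniteIndex} := by
    have hinj : Function.Injective
        (fun H : {H : Subgroup G // H.FiniteIndex} => f H.1 H.2) := by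
      intro H K h
      apply Subtype.ext
      rw [← hf H.1 H.2, ← hf K.1 K.2]
      exact congrArg (fun s : Finset G => Subgroup.closure (s : Set G)) h
    exact hinj.countable
  haveI : Nonempty {H : Subgroup G // H.FiniteIndex} := ⟨⟨⊤, inferInstance⟩⟩
  obtain ⟨e, he⟩ := exists_surjective_nat {H : Subgroup G // H.FiniteIndex}
  set N : ℕ → Subgroup G := fun i => ⨅ n ∈ Finset.range (i + 1), (e n).1 with hNdef
  have hN : ∀ i, (N i).FiniteIndex := fun i =>
    Subgroup.finiteIndex_iInf' _ (fun n _ => (e n).2)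
  have hfin : ∀ i, Finite (G ⧸ N i) := fun i =>
    Nat.finite_of_card_ne_zero (hN i).index_ne_zero
  refine ⟨fun i => (@Set.finite_range _ _ (Quotient.out : G ⧸ N i → G) (hfin i)).toFinset, ?_⟩
  intro H hH
  obtain ⟨n, hn⟩ := he ⟨H, hH⟩
  refine ⟨n, fun i hi => ?_⟩
  haveI := hN i
  have hle : N i ≤ H := by
    have h1 : N i ≤ (e n).1 := by
      refine biInf_le _ ?_
      exact Finset.mem_range.mpr (Nat.lt_succ_of_le hi)
    have h2 : (e n).1 = H := congrArg Subtype.val hn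
    rwa [h2] at h1
  refine ⟨(N i).relIndex H, ?_, ?_⟩
  · have hfi : ((N i).subgroupOf H).FiniteIndex := inferInstance
    exact Nat.pos_of_ne_zero hfi.index_ne_zero
  · intro g
    have h := aux_count hle g
    rwa [Set.Finite.coe_toFinset]
end

section
/- Let A be a finitely presented group, B a group, C ◁ B a normal subgroup, and f : A → B/C a homomorphism. Suppose (C_i) is a sequence of normal subgroups of B converging to C in the Chabauty topology (i.e., for every b ∈ B, 1_{C_i}(b) → 1_C(b)). Then for all sufficiently large i there exist homomorphisms f_i : A → B/C_i that are consistent with f, meaning for every a ∈ A there is an element b_a ∈ B with f(a) = b_aC and f_i(a) = b_aC_i for all such i. -/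
/-- Consistent homomorphisms: let `A` be finitely presented, `C ◁ B`, `f : A → B/C`
a homomorphism, and `C i ◁ B` a sequence of normal subgroups Chabauty-converging to
`C` (pointwise convergence of indicator functions). Then for all sufficiently large
`i` there exist homomorphisms `f_i : A → B/C_i` consistent with `f`: for every
`a ∈ A` there is `b_a ∈ B` with `f a = b_a C` and `f_i a = b_a C_i` for all such `i`. -/
theorem exists_consistent_homomorphisms {A B : Type*} [Group A] [Group B]
    (hfp : ∃ (n : ℕ) (rels : Finset (FreeGroup (Fin n))),
      Nonempty (A ≃* PresentedGroup ((rels : Set (FreeGroup (Fin n))))))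
    (C : Subgroup B) [C.Normal] (Ci : ℕ → Subgroup B) [∀ i, (Ci i).Normal]
    (f : A →* B ⧸ C)
    (hconv : ∀ b : B, ∃ i₀ : ℕ, ∀ i ≥ i₀, (b ∈ Ci i ↔ b ∈ C)) :
    ∃ i₀ : ℕ, ∃ fs : (i : ℕ) → (A →* B ⧸ Ci i),
      ∀ a : A, ∃ b : B, f a = QuotientGroup.mk b ∧
        ∀ i ≥ i₀, fs i a = QuotientGroup.mk b := by
  classical
  obtain ⟨n, rels, ⟨e⟩⟩ := hfp
  -- the map on generators into B ⧸ C
  set g : FreeGroup (Fin n) →* B ⧸ C :=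
    (f.comp e.symm.toMonoidHom).comp (PresentedGroup.mk _) with hg
  -- lift generators to B
  have hsurj : Function.Surjective (QuotientGroup.mk : B → B ⧸ C) :=
    QuotientGroup.mk_surjective
  choose b hb using fun j : Fin n => hsurj (g (FreeGroup.of j))
  set φ : FreeGroup (Fin n) →* B := FreeGroup.lift b with hφ
  have hcomm : ∀ w : FreeGroup (Fin n), (QuotientGroup.mk (φ w) : B ⧸ C) = g w := by
    intro w
    have : ((QuotientGroup.mk' C).comp φ) w = g w := by
      refine DFunLike.congr_fun (FreeGroup.ext_hom _ _ fun j => ?_) w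
      simp [hφ, hb j]
    simpa using this
  -- relators map into C
  have hrelC : ∀ r ∈ rels, φ r ∈ C := by
    intro r hr
    have h1 : (PresentedGroup.mk (rels : Set (FreeGroup (Fin n)))) r = 1 := by
      have : r ∈ Subgroup.normalClosure (rels : Set (FreeGroup (Fin n))) :=
        Subgroup.subset_normalClosure hr
      exact (QuotientGroup.eq_one_iff r).mpr this
    have : (QuotientGroup.mk (φ r) : B ⧸ C) = 1 := by
      rw [hcomm r, hg]; simp [h1]
    exact (QuotientGroup.eq_one_iff _).mp this
  -- choose uniform index
  choose idx hidx using fun w : FreeGroup (Fin n) => hconv (φ w)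
  set i₀ := rels.sup idx with hi₀
  have hrelCi : ∀ i ≥ i₀, ∀ r ∈ rels, φ r ∈ Ci i := by
    intro i hi r hr
    exact (hidx r i (le_trans (Finset.le_sup hr) hi)).mpr (hrelC r hr)
  -- construct homomorphisms
  have key : ∀ i ≥ i₀, ∀ r ∈ (rels : Set (FreeGroup (Fin n))),
      FreeGroup.lift (fun j => (QuotientGroup.mk (b j) : B ⧸ Ci i)) r = 1 := by
    intro i hi r hr
    have hφr : FreeGroup.lift (fun j => (QuotientGroup.mk (b j) : B ⧸ Ci i)) r
        = QuotientGroup.mk (φ r) := by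
      have : ((QuotientGroup.mk' (Ci i)).comp φ) r
          = FreeGroup.lift (fun j => (QuotientGroup.mk (b j) : B ⧸ Ci i)) r := by
        refine DFunLike.congr_fun (FreeGroup.ext_hom _ _ fun j => ?_) r
        simp [hφ]
      simpa using this.symm
    rw [hφr, QuotientGroup.eq_one_iff]
    exact hrelCi i hi r hr
  refine ⟨i₀, fun i => if hi : i ≥ i₀ then
      (PresentedGroup.toGroup (key i hi)).comp e.toMonoidHom else 1, ?_⟩
  intro a
  obtain ⟨w, hw⟩ := PresentedGroup.mk_surjective (rels : Set (FreeGroup (Fin n))) (e a)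
  refine ⟨φ w, ?_, ?_⟩
  · have : f a = g w := by
      rw [hg]; simp [hw]
    rw [this, ← hcomm w]
  · intro i hi
    simp only [hi, dif_pos]
    have : (PresentedGroup.toGroup (key i hi)) (e a)
        = QuotientGroup.mk (φ w) := by
      rw [← hw]
      show FreeGroup.lift (fun j => (QuotientGroup.mk (b j) : B ⧸ Ci i)) w = _
      have : ((QuotientGroup.mk' (Ci i)).comp φ) w
          = FreeGroup.lift (fun j => (QuotientGroup.mk (b j) : B ⧸ Ci i)) w := by
        refine DFunLike.congr_fun (FreeGroup.ext_hom _ _ fun j => ?_) w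
        simp [hφ]
      simpa using this.symm
    simpa using this
end

section
/- Let G be a countable group, H ≤ G a subgroup, and (K_i) a sequence of finite index subgroups of G with finite-to-one left transversals F_i of N_G(K_i). Suppose that for every g ∈ G, the proportion p_i(g) = |{f ∈ F_i : f⁻¹gf ∈ K_i △ H}| / |F_i| tends to 0 as i → ∞. Then for every pair of finite subsets A, B ⊆ G, |(F_i * K_i)(E_{A,B}) - (F_i * H)(E_{A,B})| → 0, where F * L denotes the measure (1/|F|) Σ_{f∈F} δ_{fLf⁻¹} on Sub(G) and E_{A,B} = {L ≤ G : A ⊆ L, B ∩ L = ∅}. -/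
open Filter Topology

/-! If `f` counts towards exactly one of `(F_i * K_i)(E_{A,B})` and `(F_i * H)(E_{A,B})`, then
`K_i` and `H` disagree on `f⁻¹gf` for some `g ∈ A ∪ B`. A union bound therefore gives
`|(F_i * K_i - F_i * H)(E_{A,B})| ≤ ∑_{g ∈ A ∪ B} p_i(g)`, which tends to `0`. -/

namespace Set

variable {α β : Type*} {s : Set α}

lemma ncard_sep_le_ncard_sep_add_ncard_sep_xor (hs : s.Finite) (P Q : α → Prop) :
    {x ∈ s | P x}.ncard ≤ {x ∈ s | Q x}.ncard + {x ∈ s | Xor (P x) (Q x)}.ncard := by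
  refine (ncard_le_ncard (fun x hx => ?_) ((hs.sep _).union (hs.sep _))).trans
    (ncard_union_le _ _)
  by_cases hQ : Q x <;> simp_all [xor_def]

lemma abs_ncard_sep_sub_ncard_sep_le (hs : s.Finite) (P Q : α → Prop) :
    |({x ∈ s | P x}.ncard : ℝ) - {x ∈ s | Q x}.ncard| ≤ {x ∈ s | Xor (P x) (Q x)}.ncard := by
  have hQP := ncard_sep_le_ncard_sep_add_ncard_sep_xor hs Q P
  simp only [xor_comm (Q _)] at hQP
  rw [abs_sub_le_iff, sub_le_iff_le_add', sub_le_iff_le_add']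
  exact ⟨mod_cast ncard_sep_le_ncard_sep_add_ncard_sep_xor hs P Q, mod_cast hQP⟩

lemma ncard_sep_le_sum_ncard_sep (hs : s.Finite) {R : α → Prop} {S : β → α → Prop}
    (t : Finset β) (h : ∀ x ∈ s, R x → ∃ g ∈ t, S g x) :
    {x ∈ s | R x}.ncard ≤ ∑ g ∈ t, {x ∈ s | S g x}.ncard := by
  refine (ncard_le_ncard (fun x hx => ?_) ?_).trans (t.set_ncard_biUnion_le _)
  · obtain ⟨g, hg, hSgx⟩ := h x hx.1 hx.2
    exact mem_biUnion hg ⟨hx.1, hSgx⟩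
  · exact t.finite_toSet.biUnion fun g _ => hs.sep _

end Set

lemma exists_mem_union_xor_of_xor_pattern {β : Type*} [DecidableEq β] {P Q : β → Prop}
    {A B : Finset β}
    (h : Xor ((∀ a ∈ A, P a) ∧ ∀ b ∈ B, ¬P b) ((∀ a ∈ A, Q a) ∧ ∀ b ∈ B, ¬Q b)) :
    ∃ g ∈ A ∪ B, Xor (P g) (Q g) := by
  contrapose! h
  simp only [not_xor] at h ⊢
  exact and_congr (forall₂_congr fun a ha => h a (Finset.mem_union_left _ ha))
    (forall₂_congr fun b hb => not_congr (h b (Finset.mem_union_right _ hb)))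

lemma abs_ncard_pattern_sub_ncard_pattern_le_sum {α β : Type*} [DecidableEq β] {s : Set α}
    (hs : s.Finite) (P Q : β → α → Prop) (A B : Finset β) :
    |({x ∈ s | (∀ a ∈ A, P a x) ∧ ∀ b ∈ B, ¬P b x}.ncard : ℝ) -
        {x ∈ s | (∀ a ∈ A, Q a x) ∧ ∀ b ∈ B, ¬Q b x}.ncard| ≤
      ∑ g ∈ A ∪ B, ({x ∈ s | Xor (P g x) (Q g x)}.ncard : ℝ) := by
  refine (Set.abs_ncard_sep_sub_ncard_sep_le hs _ _).trans ?_
  exact_mod_cast Set.ncard_sep_le_sum_ncard_sep hs (A ∪ B) fun _ _ =>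
    exists_mem_union_xor_of_xor_pattern

theorem weiss_approximation_criterion_general {G : Type*} [Group G]
    (H : Subgroup G) (K : ℕ → Subgroup G) (F : ℕ → Finset G)
    (hp : ∀ g : G, Tendsto (fun i =>
      (({f ∈ (F i : Set G) |
          Xor' (f⁻¹ * g * f ∈ K i) (f⁻¹ * g * f ∈ H)}).ncard : ℝ) / (F i).card)
      atTop (𝓝 0)) :
    ∀ A B : Finset G, Tendsto (fun i =>
      |(({f ∈ (F i : Set G) |
            (∀ a ∈ A, f⁻¹ * a * f ∈ K i) ∧ ∀ b ∈ B, f⁻¹ * b * f ∉ K i}).ncard : ℝ) /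
          (F i).card -
        (({f ∈ (F i : Set G) |
            (∀ a ∈ A, f⁻¹ * a * f ∈ H) ∧ ∀ b ∈ B, f⁻¹ * b * f ∉ H}).ncard : ℝ) /
          (F i).card|)
      atTop (𝓝 0) := by
  classical
  intro A B
  have hsum := tendsto_finsetSum (A ∪ B) fun g _ => hp g
  rw [Finset.sum_const_zero] at hsum
  refine squeeze_zero (fun i => abs_nonneg _) (fun i => ?_) hsum
  rw [div_sub_div_same, abs_div, Nat.abs_cast, ← Finset.sum_div]
  gcongr
  exact abs_ncard_pattern_sub_ncard_pattern_le_sum (F i).finite_toSet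
    (fun g f => f⁻¹ * g * f ∈ K i) (fun g f => f⁻¹ * g * f ∈ H) A B

/-- Weiss approximation criterion. Let `K i` be finite index subgroups of `G` with
finite-to-one left transversals `F i` of `N_G(K i)`. If for every `g ∈ G` the
proportion `p_i(g)` of `f ∈ F i` with `f⁻¹gf ∈ K_i △ H` tends to `0`, then for all
finite `A, B ⊆ G` the difference `(F_i * K_i)(E_{A,B}) - (F_i * H)(E_{A,B})` of the
averaged conjugate measures tends to `0`, where
`E_{A,B} = {L ≤ G : A ⊆ L, B ∩ L = ∅}` and `fLf⁻¹ ∈ E_{A,B}` is expressed as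
`∀ a ∈ A, f⁻¹af ∈ L` and `∀ b ∈ B, f⁻¹bf ∉ L`. -/
theorem weiss_approximation_criterion {G : Type*} [Group G] [Countable G]
    (H : Subgroup G) (K : ℕ → Subgroup G) (hK : ∀ i, (K i).FiniteIndex)
    (F : ℕ → Finset G) (hFne : ∀ i, (F i).Nonempty)
    (hFtrans : ∀ i, ∃ k : ℕ, 0 < k ∧ ∀ g : G,
      ({f ∈ (F i : Set G) | g⁻¹ * f ∈ Subgroup.normalizer (K i : Set G)}).ncard = k)
    (hp : ∀ g : G, Tendsto (fun i =>
      (({f ∈ (F i : Set G) |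
          Xor' (f⁻¹ * g * f ∈ K i) (f⁻¹ * g * f ∈ H)}).ncard : ℝ) / (F i).card)
      atTop (𝓝 0)) :
    ∀ A B : Finset G, Tendsto (fun i =>
      |(({f ∈ (F i : Set G) |
            (∀ a ∈ A, f⁻¹ * a * f ∈ K i) ∧ ∀ b ∈ B, f⁻¹ * b * f ∉ K i}).ncard : ℝ) /
          (F i).card -
        (({f ∈ (F i : Set G) |
            (∀ a ∈ A, f⁻¹ * a * f ∈ H) ∧ ∀ b ∈ B, f⁻¹ * b * f ∉ H}).ncard : ℝ) /
          (F i).card|)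
      atTop (𝓝 0) :=
  weiss_approximation_criterion_general H K F hp
end

section
/- Let G be a group, N ◁ G an abelian normal subgroup, H ≤ G a subgroup with N_H = H ∩ N, and suppose [N : N_N(H)] < ∞ where N_N(H) = {n ∈ N : H^n = H}. Let (M_i) be a sequence of subgroups of N with H ≤ N_G(M_i) for all i, exhausting N (i.e., every element of N eventually lies in M_i). Then for every h ∈ H there exists a finite subset Φ_h ⊆ N such that for all sufficiently large i, [h, M_i] ⊆ Φ_h + (N_H ∩ M_i), where [h,m] = h⁻¹m⁻¹hm ∈ N. -/
/-!
Fix coset representatives `r` of `N_N(H)` in `N`; they are finitely many, so all of them lie in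
`M i` for large `i`. Any `m ∈ M i` is then `r * u` with `u ∈ N_N(H) ∩ M i`, and since `N` is
abelian `[h, r u] = [h, r] [h, u]`. The first factor ranges over a finite set, and `[h, u]` lies
in `H` (as `u` normalizes `H`), in `N` (normality) and in `M i` (as `h` normalizes `M i`).
-/

open Filter

theorem Subgroup.exists_finset_inv_mul_mem_of_relIndex_ne_zero {G : Type*} [Group G]
    {A B : Subgroup G} (hB : B.relIndex A ≠ 0) :
    ∃ R : Finset G, (R : Set G) ⊆ A ∧ ∀ a ∈ A, ∃ r ∈ R, r⁻¹ * a ∈ B := by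
  classical
  have : Finite (A ⧸ B.subgroupOf A) := (Nat.card_ne_zero.mp hB).2
  have := Fintype.ofFinite (A ⧸ B.subgroupOf A)
  refine ⟨Finset.univ.image fun q : A ⧸ B.subgroupOf A => (q.out : G), ?_, fun a ha => ?_⟩
  · simp only [Finset.coe_image, Finset.coe_univ, Set.image_univ]
    rintro _ ⟨q, rfl⟩
    exact q.out.2
  · let q : A ⧸ B.subgroupOf A := QuotientGroup.mk ⟨a, ha⟩
    refine ⟨q.out, Finset.mem_image_of_mem _ (Finset.mem_univ q), ?_⟩
    exact Subgroup.mem_subgroupOf.mp (QuotientGroup.eq.mp (QuotientGroup.out_eq' q))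

theorem Subgroup.inv_mul_inv_mul_mul_mul_mem_of_mem_of_mem_normalizer {G : Type*} [Group G]
    {K : Subgroup G} {h u : G} (hh : h ∈ K) (hu : u ∈ Subgroup.normalizer (K : Set G)) :
    h⁻¹ * u⁻¹ * h * u ∈ K := by
  have : u⁻¹ * h * u ∈ K := by
    simpa using (Subgroup.mem_normalizer_iff.mp (inv_mem hu) h).mp hh
  simpa [mul_assoc] using K.mul_mem (K.inv_mem hh) this

theorem Subgroup.inv_mul_inv_mul_mul_mul_mem_of_mem_normalizer_of_mem {G : Type*} [Group G]
    {K : Subgroup G} {h u : G} (hh : h ∈ Subgroup.normalizer (K : Set G)) (hu : u ∈ K) :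
    h⁻¹ * u⁻¹ * h * u ∈ K := by
  have : h⁻¹ * u⁻¹ * h ∈ K := by
    simpa using (Subgroup.mem_normalizer_iff.mp (inv_mem hh) u⁻¹).mp (inv_mem hu)
  exact K.mul_mem this hu

theorem inv_mul_inv_mul_mul_mul_mul_eq_of_commute {G : Type*} [Group G] {h n u : G}
    (hc : Commute (h⁻¹ * u⁻¹ * h) (h⁻¹ * n⁻¹ * h * n)) :
    h⁻¹ * (n * u)⁻¹ * h * (n * u) = (h⁻¹ * n⁻¹ * h * n) * (h⁻¹ * u⁻¹ * h * u) :=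
  calc h⁻¹ * (n * u)⁻¹ * h * (n * u)
      = (h⁻¹ * u⁻¹ * h) * (h⁻¹ * n⁻¹ * h * n) * u := by group
    _ = (h⁻¹ * n⁻¹ * h * n) * (h⁻¹ * u⁻¹ * h) * u := by rw [hc.eq]
    _ = (h⁻¹ * n⁻¹ * h * n) * (h⁻¹ * u⁻¹ * h * u) := by group

/-- Let `N ◁ G` be abelian, `H ≤ G` with `N_N(H) = N ⊓ N_G(H)` of finite index in
`N`, and let `(M i)` be subgroups of `N`, normalized by `H`, exhausting `N`. Then
for every `h ∈ H` there is a finite subset `Φ_h ⊆ N` such that for all sufficiently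
large `i`, `[h, M_i] ⊆ Φ_h + (N_H ∩ M_i)`: every commutator `[h,m] = h⁻¹m⁻¹hm` with
`m ∈ M i` is a product `φ * x` with `φ ∈ Φ_h` and `x ∈ H ⊓ N ⊓ M i`. -/
theorem commutators_in_exhausting_subgroups {G : Type*} [Group G]
    (N : Subgroup G) [N.Normal] (habel : ∀ a ∈ N, ∀ b ∈ N, a * b = b * a)
    (H : Subgroup G) (hfi : (Subgroup.normalizer (H : Set G)).relIndex N ≠ 0)
    (M : ℕ → Subgroup G) (hMN : ∀ i, M i ≤ N)
    (hHM : ∀ i, H ≤ Subgroup.normalizer (M i : Set G))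
    (hexh : ∀ n ∈ N, ∃ i₀ : ℕ, ∀ i ≥ i₀, n ∈ M i) :
    ∀ h ∈ H, ∃ Φ : Finset G, (Φ : Set G) ⊆ (N : Set G) ∧
      ∃ i₀ : ℕ, ∀ i ≥ i₀, ∀ m ∈ M i,
        ∃ φ ∈ Φ, ∃ x ∈ H ⊓ N ⊓ M i, h⁻¹ * m⁻¹ * h * m = φ * x := by
  classical
  intro h hh
  obtain ⟨R, hRN, hR⟩ := Subgroup.exists_finset_inv_mul_mem_of_relIndex_ne_zero hfi
  have hcommN : ∀ g ∈ N, h⁻¹ * g⁻¹ * h * g ∈ N := fun g hg =>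
    Subgroup.inv_mul_inv_mul_mul_mul_mem_of_mem_normalizer_of_mem
      (by rw [Subgroup.normalizer_eq_top]; trivial) hg
  obtain ⟨i₀, hi₀⟩ : ∃ i₀, ∀ i ≥ i₀, ∀ r ∈ R, r ∈ M i :=
    eventually_atTop.mp <| R.eventually_all.mpr fun r hr => eventually_atTop.mpr (hexh r (hRN hr))
  refine ⟨R.image fun r => h⁻¹ * r⁻¹ * h * r, ?_, i₀, fun i hi m hm => ?_⟩
  · rw [Finset.coe_image, Set.image_subset_iff]
    exact fun r hr => hcommN r (hRN hr)
  obtain ⟨r, hr, hu⟩ := hR m (hMN i hm)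
  set u := r⁻¹ * m
  have huM : u ∈ M i := (M i).mul_mem (inv_mem (hi₀ i hi r hr)) hm
  have hcomm : Commute (h⁻¹ * u⁻¹ * h) (h⁻¹ * r⁻¹ * h * r) :=
    habel _ (Subgroup.Normal.conj_mem' ‹_› _ (inv_mem (hMN i huM)) h) _ (hcommN r (hRN hr))
  refine ⟨_, Finset.mem_image_of_mem _ hr, h⁻¹ * u⁻¹ * h * u,
    ⟨⟨Subgroup.inv_mul_inv_mul_mul_mul_mem_of_mem_of_mem_normalizer hh hu, hcommN u (hMN i huM)⟩,
      Subgroup.inv_mul_inv_mul_mul_mul_mem_of_mem_normalizer_of_mem (hHM i hh) huM⟩, ?_⟩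
  rw [← inv_mul_inv_mul_mul_mul_mul_eq_of_commute hcomm, mul_inv_cancel_left]
end
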